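/- arXiv:1808.06534 — 2 statements merged into one kernel-verified Lean document; each statement's English description precedes it below -/
import Mathlib

section
/- Let $r' \in (1,2)$, let $M > 2$, and let $I_1, \dots, I_m$ be pairwise disjoint intervals of equal length $\delta$ all contained in an interval $J$. Let $h \in L^{r'}(\mathbb{R})$ and let $\phi \in L^1(\mathbb{R})$ satisfy $|\phi(y)| \le \delta^{-1}(1 + |y|/\delta)^{-M}$. Then $$\sum_{i=1}^m |I_i| \, \|h * \phi\|_{L^\infty(I_i)}^{r'} \lesssim_M \int_{\mathbb{R}} |h(z)|^{r'} \Phi_J(z)\, dz,$$ where $\Phi_J(z) = (1 + \mathrm{dist}(z, J)/|J|)^{-N}$ for some $N > 0$ depending on $M$, provided $m\delta \le |J|$. -/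
/-!
For `x` in a tile `I` of length `δ`, `|h * φ (x)| ≤ ∫ |h| wₓ` with
`wₓ(y) = δ⁻¹ (1 + |x - y|/δ)^{-M}`, a kernel of mass `2/(M-1)`. Jensen's inequality against
`wₓ / ‖wₓ‖₁` and `|x - y| ≥ dist(y, I)` give
`|h * φ (x)|^{r'} ≲ δ⁻¹ ∫ |h|^{r'} (1 + dist(·, I)/δ)^{-M}`.
Summing over the tiles, split off `(1 + dist(z, Iᵢ)/δ)^{-2}` from each weight: the rest is at most
`(1 + dist(z, J)/|J|)^{-(M-2)}`, and these factors sum to `O(1)` because each is comparable to the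
average of `(1 + |z - y|/δ)^{-2}` over `Iᵢ`, and the `Iᵢ` are disjoint. Hence `N = M - 2`.
-/

open MeasureTheory Set Metric Function

/-- The paper's weight `Φ_J(z)` is `decayWeight N |J| (dist(z, J))`, and the kernel bound reads
`|φ y| ≤ δ⁻¹ decayWeight M δ |y|`. -/
noncomputable def decayWeight (N ℓ d : ℝ) : ℝ := (1 + d / ℓ) ^ (-N)

namespace decayWeight

variable {N N' ℓ ℓ' d d' : ℝ}

lemma one_add_div_pos (hℓ : 0 < ℓ) (hd : 0 ≤ d) : 0 < 1 + d / ℓ := by positivity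

lemma pos (hℓ : 0 < ℓ) (hd : 0 ≤ d) : 0 < decayWeight N ℓ d :=
  Real.rpow_pos_of_pos (one_add_div_pos hℓ hd) _

lemma le_one (hN : 0 ≤ N) (hℓ : 0 < ℓ) (hd : 0 ≤ d) : decayWeight N ℓ d ≤ 1 :=
  Real.rpow_le_one_of_one_le_of_nonpos (by simp; positivity) (by linarith)

lemma le_of_div_le_div (hN : 0 ≤ N) (hℓ : 0 < ℓ) (hd : 0 ≤ d) (h : d / ℓ ≤ d' / ℓ') :
    decayWeight N ℓ' d' ≤ decayWeight N ℓ d :=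
  Real.rpow_le_rpow_of_nonpos (one_add_div_pos hℓ hd) (by linarith) (by linarith)

lemma add (hℓ : 0 < ℓ) (hd : 0 ≤ d) :
    decayWeight (N + N') ℓ d = decayWeight N ℓ d * decayWeight N' ℓ d := by
  rw [decayWeight, decayWeight, decayWeight, neg_add, Real.rpow_add (one_add_div_pos hℓ hd)]

lemma le_two_rpow_mul (hN : 0 ≤ N) (hℓ : 0 < ℓ) (hd : 0 ≤ d) (hd' : 0 ≤ d')
    (h : d' ≤ d + ℓ) : decayWeight N ℓ d ≤ 2 ^ N * decayWeight N ℓ d' := by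
  have hdiv : d' / ℓ ≤ d / ℓ + 1 := by
    rwa [div_add_one hℓ.ne', div_le_div_iff_of_pos_right hℓ]
  have : 0 ≤ d / ℓ := div_nonneg hd hℓ.le
  calc decayWeight N ℓ d = 2 ^ N * (2 * (1 + d / ℓ)) ^ (-N) := by
        rw [Real.mul_rpow zero_le_two (one_add_div_pos hℓ hd).le, ← mul_assoc,
          ← Real.rpow_add two_pos, add_neg_cancel, Real.rpow_zero, one_mul, decayWeight]
    _ ≤ 2 ^ N * decayWeight N ℓ d' := by
        gcongr
        exact Real.rpow_le_rpow_of_nonpos (one_add_div_pos hℓ hd') (by linarith) (by linarith)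

lemma abs_sub_le_infDist_of_mem (hN : 0 ≤ N) (hℓ : 0 < ℓ) {s : Set ℝ} {x : ℝ} (hx : x ∈ s)
    (y : ℝ) : decayWeight N ℓ |x - y| ≤ decayWeight N ℓ (infDist y s) := by
  have hdist : infDist y s ≤ |x - y| := by
    simpa [Real.dist_eq, abs_sub_comm] using infDist_le_dist_of_mem (x := y) hx
  exact le_of_div_le_div hN hℓ infDist_nonneg (div_le_div_of_nonneg_right hdist hℓ.le)

@[fun_prop]
lemma measurable : Measurable (decayWeight N ℓ) := by
  unfold decayWeight; fun_prop

lemma abs_eq_one_add_norm_rpow (hℓ : 0 < ℓ) (u : ℝ) :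
    decayWeight N ℓ |u| = (1 + ‖u / ℓ‖) ^ (-N) := by
  rw [decayWeight, Real.norm_eq_abs, abs_div, abs_of_pos hℓ]

lemma integrable_abs (hN : 1 < N) (hℓ : 0 < ℓ) :
    Integrable (fun u ↦ decayWeight N ℓ |u|) := by
  simp_rw [abs_eq_one_add_norm_rpow hℓ]
  exact (integrable_one_add_norm (E := ℝ) (by simpa using hN)).comp_div hℓ.ne'

lemma integral_Ioi_one_add_rpow (hN : 1 < N) :
    ∫ x in Ioi (0 : ℝ), (1 + x) ^ (-N) = (N - 1)⁻¹ := by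
  have htrans : ∫ x in Ioi (0 : ℝ), (1 + x) ^ (-N) = ∫ x in Ioi (1 : ℝ), x ^ (-N) := by
    rw [← integral_indicator measurableSet_Ioi, ← integral_indicator measurableSet_Ioi]
    conv_rhs => rw [← integral_add_right_eq_self _ 1]
    congr 1 with x
    simp [indicator, add_comm x 1]
  rw [htrans, integral_Ioi_rpow_of_lt (by linarith) one_pos, Real.one_rpow,
    show -N + 1 = -(N - 1) by ring, neg_div_neg_eq, one_div]

lemma integral_abs (hN : 1 < N) (hℓ : 0 < ℓ) :
    ∫ u, decayWeight N ℓ |u| = 2 * ℓ / (N - 1) := by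
  simp_rw [abs_eq_one_add_norm_rpow hℓ]
  rw [Measure.integral_comp_div (fun v ↦ (1 + ‖v‖) ^ (-N)), abs_of_pos hℓ, smul_eq_mul]
  simp only [Real.norm_eq_abs]
  rw [integral_comp_abs (f := fun x ↦ (1 + x) ^ (-N)), integral_Ioi_one_add_rpow hN]
  ring

lemma _root_.MeasureTheory.Integrable.mul_decayWeight_comp {α : Type*} [MeasurableSpace α]
    {μ : Measure α} {f g : α → ℝ} (hf : Integrable f μ) (hg : Measurable g)
    (hg0 : ∀ x, 0 ≤ g x) (hN : 0 ≤ N) (hℓ : 0 < ℓ) :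
    Integrable (fun x ↦ f x * decayWeight N ℓ (g x)) μ :=
  hf.mul_bdd (measurable.comp hg).aestronglyMeasurable (c := 1) <| ae_of_all _ fun x ↦ by
    rw [Real.norm_of_nonneg (pos hℓ (hg0 x)).le]
    exact le_one hN hℓ (hg0 x)

end decayWeight

section WeightedJensen

variable {α : Type*} [MeasurableSpace α] {μ : Measure α} {p : ℝ} {f w : α → ℝ}

lemma integrable_mul_of_integrable_rpow_mul (hp : 1 ≤ p) (hf : 0 ≤ f) (hw : 0 ≤ w)
    (hfm : AEStronglyMeasurable f μ) (hwi : Integrable w μ)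
    (hfwi : Integrable (fun x ↦ f x ^ p * w x) μ) : Integrable (fun x ↦ f x * w x) μ := by
  refine (hfwi.add hwi).mono' (hfm.mul hwi.1) (ae_of_all _ fun x ↦ ?_)
  have hf_le : f x ≤ f x ^ p + 1 := by
    rcases le_total (f x) 1 with h | h
    · linarith [Real.rpow_nonneg (hf x) p]
    · linarith [Real.self_le_rpow_of_one_le h hp]
  show ‖f x * w x‖ ≤ f x ^ p * w x + w x
  rw [Real.norm_of_nonneg (mul_nonneg (hf x) (hw x))]
  linarith [mul_le_mul_of_nonneg_right hf_le (hw x)]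

lemma rpow_integral_mul_le (hp : 1 ≤ p) (hf : 0 ≤ f) (hw : 0 ≤ w)
    (hfm : AEStronglyMeasurable f μ) (hwi : Integrable w μ)
    (hfwi : Integrable (fun x ↦ f x ^ p * w x) μ) :
    (∫ x, f x * w x ∂μ) ^ p ≤ (∫ x, w x ∂μ) ^ (p - 1) * ∫ x, f x ^ p * w x ∂μ := by
  have hfw := integrable_mul_of_integrable_rpow_mul hp hf hw hfm hwi hfwi
  set S := ∫ x, f x * w x ∂μ
  set W := ∫ x, w x ∂μ
  set I := ∫ x, f x ^ p * w x ∂μ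
  have hW : 0 ≤ W := integral_nonneg hw
  have hS : 0 ≤ S := integral_nonneg fun x ↦ mul_nonneg (hf x) (hw x)
  rcases hS.eq_or_lt with hS | hS
  · rw [← hS, Real.zero_rpow (by linarith)]
    exact mul_nonneg (Real.rpow_nonneg hW _)
      (integral_nonneg fun x ↦ mul_nonneg (Real.rpow_nonneg (hf x) _) (hw x))
  have hWpos : 0 < W := by
    refine hW.lt_of_ne fun hW0 ↦ hS.ne' (integral_eq_zero_of_ae ?_)
    filter_upwards [(integral_eq_zero_iff_of_nonneg hw hwi).1 hW0.symm] with x hx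
    simp [hx]
  -- Jensen's inequality against `w / W`, via the tangent line of `x ↦ x ^ p` at the mean `A`.
  set A := S / W
  have hA : 0 < A := div_pos hS hWpos
  have tangent : ∀ x, A ^ p * (w x + p * (f x * w x / A - w x)) ≤ f x ^ p * w x := by
    intro x
    have bernoulli := one_add_mul_self_le_rpow_one_add (s := f x / A - 1)
      (by linarith [div_nonneg (hf x) hA.le]) hp
    rw [add_sub_cancel, Real.div_rpow (hf x) hA.le] at bernoulli
    calc A ^ p * (w x + p * (f x * w x / A - w x)) = A ^ p * (1 + p * (f x / A - 1)) * w x := by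
          ring
      _ ≤ A ^ p * (f x ^ p / A ^ p) * w x := by gcongr; exact hw x
      _ = f x ^ p * w x := by field_simp
  have hdev : Integrable (fun x ↦ p * (f x * w x / A - w x)) μ :=
    ((hfw.div_const A).sub hwi).const_mul p
  have hmean : ∫ x, A ^ p * (w x + p * (f x * w x / A - w x)) ∂μ = A ^ p * W := by
    rw [integral_const_mul, integral_add hwi hdev, integral_const_mul,
      integral_sub (hfw.div_const A) hwi, integral_div]
    change A ^ p * (W + p * (S / (S / W) - W)) = A ^ p * W
    rw [div_div_cancel₀ hS.ne']
    ring
  have key : A ^ p * W ≤ I := hmean ▸ integral_mono ((hwi.add hdev).const_mul _) hfwi tangent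
  calc S ^ p = A ^ p * W * W ^ (p - 1) := by
        rw [mul_assoc, ← Real.rpow_one_add' hW (by linarith), add_sub_cancel,
          ← Real.mul_rpow hA.le hW, div_mul_cancel₀ S hWpos.ne']
    _ ≤ W ^ (p - 1) * I := by rw [mul_comm]; gcongr

end WeightedJensen

lemma norm_integral_mul_sub_rpow_le {𝕜 : Type*} [RCLike 𝕜] {p M δ x : ℝ} {s : Set ℝ}
    (hp : 1 ≤ p) (hM : 1 < M) (hδ : 0 < δ) {h φ : ℝ → 𝕜} (hhm : AEStronglyMeasurable h)
    (hhi : Integrable (fun z ↦ ‖h z‖ ^ p)) (hφ : ∀ y, ‖φ y‖ ≤ δ⁻¹ * decayWeight M δ |y|)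
    (hx : x ∈ s) :
    ‖∫ y, h y * φ (x - y)‖ ^ p ≤
      (2 / (M - 1)) ^ (p - 1) * (δ⁻¹ * ∫ z, ‖h z‖ ^ p * decayWeight M δ (infDist z s)) := by
  set w : ℝ → ℝ := fun y ↦ δ⁻¹ * decayWeight M δ |x - y|
  have hw : 0 ≤ w := fun y ↦
    mul_nonneg (inv_nonneg.2 hδ.le) (decayWeight.pos hδ (abs_nonneg _)).le
  have hwi : Integrable w := ((decayWeight.integrable_abs hM hδ).comp_sub_left x).const_mul δ⁻¹
  have hW : ∫ y, w y = 2 / (M - 1) := by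
    rw [integral_const_mul, integral_sub_left_eq_self (fun u ↦ decayWeight M δ |u|),
      decayWeight.integral_abs hM hδ]
    field_simp
  have hfwi : Integrable (fun y ↦ ‖h y‖ ^ p * w y) := by
    refine ((hhi.mul_decayWeight_comp (g := fun y ↦ |x - y|) (N := M) (by fun_prop)
      (fun _ ↦ abs_nonneg _) (by linarith) hδ).const_mul δ⁻¹).congr (ae_of_all _ fun y ↦ ?_)
    simp only [w]
    ring
  have hw_le : ∀ y, ‖h y‖ ^ p * w y ≤ δ⁻¹ * (‖h y‖ ^ p * decayWeight M δ (infDist y s)) :=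
    fun y ↦ by
      have := decayWeight.abs_sub_le_infDist_of_mem (N := M) (by linarith) hδ hx y
      calc ‖h y‖ ^ p * w y = δ⁻¹ * (‖h y‖ ^ p * decayWeight M δ |x - y|) := by ring
        _ ≤ _ := by gcongr
  calc ‖∫ y, h y * φ (x - y)‖ ^ p ≤ (∫ y, ‖h y‖ * w y) ^ p := by
        refine Real.rpow_le_rpow (norm_nonneg _)
          (norm_integral_le_of_norm_le ?_ (ae_of_all _ fun y ↦ ?_)) (by linarith)
        · exact integrable_mul_of_integrable_rpow_mul hp (fun _ ↦ norm_nonneg _) hw hhm.norm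
            hwi hfwi
        · rw [norm_mul]
          exact mul_le_mul_of_nonneg_left (hφ (x - y)) (norm_nonneg _)
    _ ≤ (∫ y, w y) ^ (p - 1) * ∫ y, ‖h y‖ ^ p * w y :=
        rpow_integral_mul_le hp (fun _ ↦ norm_nonneg _) hw hhm.norm hwi hfwi
    _ ≤ _ := by
        rw [hW, ← integral_const_mul δ⁻¹]
        refine mul_le_mul_of_nonneg_left (integral_mono hfwi ?_ hw_le)
          (Real.rpow_nonneg (div_nonneg zero_le_two (sub_nonneg.2 hM.le)) _)
        exact (hhi.mul_decayWeight_comp (N := M) (continuous_infDist_pt s).measurable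
          (fun _ ↦ infDist_nonneg) (by linarith) hδ).const_mul δ⁻¹

lemma mul_iSup_norm_integral_mul_sub_rpow_le {𝕜 : Type*} [RCLike 𝕜] {p M δ : ℝ} {s : Set ℝ}
    (hp : 1 ≤ p) (hM : 1 < M) (hδ : 0 < δ) {h φ : ℝ → 𝕜} (hhm : AEStronglyMeasurable h)
    (hhi : Integrable (fun z ↦ ‖h z‖ ^ p)) (hφ : ∀ y, ‖φ y‖ ≤ δ⁻¹ * decayWeight M δ |y|) :
    δ * ⨆ x ∈ s, ‖∫ y, h y * φ (x - y)‖ ^ p ≤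
      (2 / (M - 1)) ^ (p - 1) * ∫ z, ‖h z‖ ^ p * decayWeight M δ (infDist z s) := by
  set B := (2 / (M - 1)) ^ (p - 1) * (δ⁻¹ * ∫ z, ‖h z‖ ^ p * decayWeight M δ (infDist z s))
  have hB : 0 ≤ B :=
    mul_nonneg (Real.rpow_nonneg (div_nonneg zero_le_two (sub_nonneg.2 hM.le)) _)
      (mul_nonneg (inv_nonneg.2 hδ.le) (integral_nonneg fun z ↦ mul_nonneg
        (Real.rpow_nonneg (norm_nonneg _) _) (decayWeight.pos hδ infDist_nonneg).le))
  calc δ * ⨆ x ∈ s, ‖∫ y, h y * φ (x - y)‖ ^ p ≤ δ * B :=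
        mul_le_mul_of_nonneg_left (Real.iSup_le (fun x ↦ Real.iSup_le (fun hx ↦
          norm_integral_mul_sub_rpow_le hp hM hδ hhm hhi hφ hx) hB) hB) hδ.le
    _ = _ := by simp only [B]; field_simp

section TileWeights

variable {a δ z : ℝ}

lemma mul_decayWeight_infDist_Icc_le (ha : 1 < a) (hδ : 0 < δ) (t : ℝ) :
    δ * decayWeight a δ (infDist z (Icc t (t + δ))) ≤
      2 ^ a * ∫ y in Ioo t (t + δ), decayWeight a δ |z - y| := by
  obtain ⟨y₀, hy₀, hdist⟩ :=
    isCompact_Icc.exists_infDist_eq_dist (nonempty_Icc.2 (by linarith : t ≤ t + δ)) z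
  have hnear : ∀ y ∈ Ioo t (t + δ), |z - y| ≤ infDist z (Icc t (t + δ)) + δ := fun y hy ↦ by
    have hy₀y : dist y₀ y ≤ δ := by
      rw [Real.dist_eq, abs_le]
      constructor <;> linarith [hy₀.1, hy₀.2, hy.1, hy.2]
    rw [hdist, ← Real.dist_eq]
    linarith [dist_triangle z y₀ y]
  calc δ * decayWeight a δ (infDist z (Icc t (t + δ)))
      = ∫ _ in Ioo t (t + δ), decayWeight a δ (infDist z (Icc t (t + δ))) := by
        rw [setIntegral_const, measureReal_def, Real.volume_Ioo, add_sub_cancel_left,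
          ENNReal.toReal_ofReal hδ.le, smul_eq_mul]
    _ ≤ ∫ y in Ioo t (t + δ), 2 ^ a * decayWeight a δ |z - y| :=
        setIntegral_mono_on (integrableOn_const (by simp))
          (((decayWeight.integrable_abs ha hδ).comp_sub_left z).const_mul _).integrableOn
          measurableSet_Ioo fun y hy ↦ decayWeight.le_two_rpow_mul (by linarith) hδ
            infDist_nonneg (abs_nonneg _) (hnear y hy)
    _ = 2 ^ a * ∫ y in Ioo t (t + δ), decayWeight a δ |z - y| := integral_const_mul _ _

lemma sum_decayWeight_infDist_Icc_le {ι : Type*} [Fintype ι] (ha : 1 < a) (hδ : 0 < δ)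
    {t : ι → ℝ} (hdisj : Pairwise (Disjoint on fun i ↦ Ioo (t i) (t i + δ))) :
    ∑ i, decayWeight a δ (infDist z (Icc (t i) (t i + δ))) ≤ 2 ^ (a + 1) / (a - 1) := by
  have hg := (decayWeight.integrable_abs ha hδ).comp_sub_left z
  refine le_of_mul_le_mul_left ?_ hδ
  calc δ * ∑ i, decayWeight a δ (infDist z (Icc (t i) (t i + δ)))
      ≤ ∑ i, 2 ^ a * ∫ y in Ioo (t i) (t i + δ), decayWeight a δ |z - y| := by
        rw [Finset.mul_sum]
        exact Finset.sum_le_sum fun i _ ↦ mul_decayWeight_infDist_Icc_le ha hδ (t i)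
    _ = 2 ^ a * ∫ y in ⋃ i, Ioo (t i) (t i + δ), decayWeight a δ |z - y| := by
        rw [← Finset.mul_sum, integral_iUnion_fintype (fun _ ↦ measurableSet_Ioo) hdisj
          fun _ ↦ hg.integrableOn]
    _ ≤ 2 ^ a * ∫ y, decayWeight a δ |z - y| :=
        mul_le_mul_of_nonneg_left (setIntegral_le_integral hg
          (ae_of_all _ fun y ↦ (decayWeight.pos hδ (abs_nonneg _)).le)) (by positivity)
    _ = δ * (2 ^ (a + 1) / (a - 1)) := by
        rw [integral_sub_left_eq_self (fun u ↦ decayWeight a δ |u|),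
          decayWeight.integral_abs ha hδ, Real.rpow_add_one two_ne_zero]
        ring

lemma sum_decayWeight_infDist_Icc_le_decayWeight {ι : Type*} [Fintype ι] {N aJ bJ : ℝ}
    (hN : 0 ≤ N) (ha : 1 < a) (hδ : 0 < δ) (hJ : aJ < bJ) {t : ι → ℝ}
    (hsub : ∀ i, Icc (t i) (t i + δ) ⊆ Icc aJ bJ)
    (hdisj : Pairwise (Disjoint on fun i ↦ Ioo (t i) (t i + δ))) :
    ∑ i, decayWeight (N + a) δ (infDist z (Icc (t i) (t i + δ))) ≤
      2 ^ (a + 1) / (a - 1) * decayWeight N (bJ - aJ) (infDist z (Icc aJ bJ)) := by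
  have hJ_le : ∀ i, decayWeight N δ (infDist z (Icc (t i) (t i + δ))) ≤
      decayWeight N (bJ - aJ) (infDist z (Icc aJ bJ)) := fun i ↦ by
    have hIi : (Icc (t i) (t i + δ)).Nonempty := nonempty_Icc.2 (by linarith)
    have hδJ : δ ≤ bJ - aJ := by
      linarith [(hsub i (left_mem_Icc.2 (by linarith))).1,
        (hsub i (right_mem_Icc.2 (by linarith))).2]
    exact decayWeight.le_of_div_le_div hN (by linarith) infDist_nonneg
      (div_le_div₀ infDist_nonneg (infDist_le_infDist_of_subset (hsub i) hIi) hδ hδJ)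
  calc ∑ i, decayWeight (N + a) δ (infDist z (Icc (t i) (t i + δ)))
      ≤ ∑ i, decayWeight N (bJ - aJ) (infDist z (Icc aJ bJ)) *
          decayWeight a δ (infDist z (Icc (t i) (t i + δ))) := by
        refine Finset.sum_le_sum fun i _ ↦ ?_
        rw [decayWeight.add hδ infDist_nonneg]
        exact mul_le_mul_of_nonneg_right (hJ_le i) (decayWeight.pos hδ infDist_nonneg).le
    _ ≤ _ := by
        rw [← Finset.mul_sum, mul_comm]
        exact mul_le_mul_of_nonneg_right (sum_decayWeight_infDist_Icc_le ha hδ hdisj)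
          (decayWeight.pos (by linarith) infDist_nonneg).le

lemma sum_integral_mul_decayWeight_infDist_Icc_le {ι : Type*} [Fintype ι] {N aJ bJ : ℝ}
    {F : ℝ → ℝ} (hF : 0 ≤ F) (hFi : Integrable F) (hN : 0 ≤ N) (ha : 1 < a) (hδ : 0 < δ)
    (hJ : aJ < bJ) {t : ι → ℝ} (hsub : ∀ i, Icc (t i) (t i + δ) ⊆ Icc aJ bJ)
    (hdisj : Pairwise (Disjoint on fun i ↦ Ioo (t i) (t i + δ))) :
    ∑ i, ∫ z, F z * decayWeight (N + a) δ (infDist z (Icc (t i) (t i + δ))) ≤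
      2 ^ (a + 1) / (a - 1) * ∫ z, F z * decayWeight N (bJ - aJ) (infDist z (Icc aJ bJ)) := by
  have hint : ∀ {N' ℓ : ℝ} (s : Set ℝ), 0 ≤ N' → 0 < ℓ →
      Integrable (fun z ↦ F z * decayWeight N' ℓ (infDist z s)) := fun s hN' hℓ ↦
    hFi.mul_decayWeight_comp (continuous_infDist_pt s).measurable (fun _ ↦ infDist_nonneg) hN' hℓ
  rw [← integral_finsetSum _ fun i _ ↦ hint _ (by linarith) hδ, ← integral_const_mul]
  refine integral_mono (integrable_finsetSum _ fun i _ ↦ hint _ (by linarith) hδ)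
    ((hint _ hN (by linarith)).const_mul _) fun z ↦ ?_
  simp only [← Finset.mul_sum]
  exact (mul_le_mul_of_nonneg_left
    (sum_decayWeight_infDist_Icc_le_decayWeight hN ha hδ hJ hsub hdisj) (hF z)).trans_eq
    (mul_left_comm _ _ _)

end TileWeights

theorem small_tiles_h_estimate_general (r' M : ℝ) (hr'₁ : 1 < r') (hM : 2 < M) :
    ∃ (N : ℝ), 0 < N ∧ ∃ (K : ℝ), 0 < K ∧ ∀ (m : ℕ) (δ : ℝ), 0 < δ → ∀ (t : Fin m → ℝ) (aJ bJ : ℝ),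
      aJ < bJ →
      (∀ i, Set.Icc (t i) (t i + δ) ⊆ Set.Icc aJ bJ) →
      Pairwise (Function.onFun Disjoint (fun i => Set.Ioo (t i) (t i + δ))) →
      m * δ ≤ bJ - aJ →
      ∀ (h : ℝ → ℂ) (φ : ℝ → ℂ),
        MemLp h (ENNReal.ofReal r') volume →
        Integrable φ volume →
        (∀ y : ℝ, ‖φ y‖ ≤ δ⁻¹ * (1 + |y| / δ) ^ (-M)) →
        ∑ i : Fin m, δ * (⨆ x ∈ Set.Icc (t i) (t i + δ), ‖∫ y, h y * φ (x - y)‖ ^ r')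
          ≤ K * ∫ z, ‖h z‖ ^ r' *
              (1 + Metric.infDist z (Set.Icc aJ bJ) / (bJ - aJ)) ^ (-N) := by
  have hC : 0 < (2 / (M - 1)) ^ (r' - 1) :=
    Real.rpow_pos_of_pos (div_pos two_pos (by linarith)) _
  refine ⟨M - 2, by linarith, 8 * (2 / (M - 1)) ^ (r' - 1), by positivity, ?_⟩
  intro m δ hδ t aJ bJ hJ hsub hdisj _ h φ hh _ hφ
  have hhi : Integrable (fun z ↦ ‖h z‖ ^ r') := by
    simpa [ENNReal.toReal_ofReal (by linarith : 0 ≤ r')] using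
      hh.integrable_norm_rpow (by simp; linarith) ENNReal.ofReal_ne_top
  have hsum := sum_integral_mul_decayWeight_infDist_Icc_le (N := M - 2) (a := 2)
    (fun z ↦ Real.rpow_nonneg (norm_nonneg (h z)) r') hhi (by linarith) one_lt_two hδ hJ hsub
    hdisj
  rw [sub_add_cancel, show (2 : ℝ) ^ ((2 : ℝ) + 1) / (2 - 1) = 8 by norm_num] at hsum
  calc ∑ i, δ * (⨆ x ∈ Icc (t i) (t i + δ), ‖∫ y, h y * φ (x - y)‖ ^ r')
      ≤ ∑ i, (2 / (M - 1)) ^ (r' - 1) *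
          ∫ z, ‖h z‖ ^ r' * decayWeight M δ (infDist z (Icc (t i) (t i + δ))) :=
        Finset.sum_le_sum fun i _ ↦
          mul_iSup_norm_integral_mul_sub_rpow_le hr'₁.le (by linarith) hδ hh.1 hhi hφ
    _ ≤ (2 / (M - 1)) ^ (r' - 1) *
          (8 * ∫ z, ‖h z‖ ^ r' * decayWeight (M - 2) (bJ - aJ) (infDist z (Icc aJ bJ))) := by
        rw [← Finset.mul_sum]
        exact mul_le_mul_of_nonneg_left hsum hC.le
    _ = 8 * (2 / (M - 1)) ^ (r' - 1) *
          ∫ z, ‖h z‖ ^ r' * decayWeight (M - 2) (bJ - aJ) (infDist z (Icc aJ bJ)) := by ring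

/-- The estimate from Section 3 controlling the contribution of the dualizing function on
the small tiles of a super tile: for pairwise disjoint intervals `Iᵢ = [tᵢ, tᵢ+δ]` of
equal length `δ` contained in `J = [aJ, bJ]` with `mδ ≤ |J|`, and a kernel `φ` with
`|φ(y)| ≤ δ⁻¹(1+|y|/δ)^{-M}`,
`∑ᵢ |Iᵢ| ‖h * φ‖_{L^∞(Iᵢ)}^{r'} ≲_M ∫ |h(z)|^{r'} (1 + dist(z,J)/|J|)^{-N} dz`
for some `N > 0` depending on `M`. -/
theorem small_tiles_h_estimate (r' M : ℝ) (hr'₁ : 1 < r') (hr'₂ : r' < 2) (hM : 2 < M) :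
    ∃ (N : ℝ), 0 < N ∧ ∃ (K : ℝ), 0 < K ∧ ∀ (m : ℕ) (δ : ℝ), 0 < δ → ∀ (t : Fin m → ℝ) (aJ bJ : ℝ),
      aJ < bJ →
      (∀ i, Set.Icc (t i) (t i + δ) ⊆ Set.Icc aJ bJ) →
      Pairwise (Function.onFun Disjoint (fun i => Set.Ioo (t i) (t i + δ))) →
      m * δ ≤ bJ - aJ →
      ∀ (h : ℝ → ℂ) (φ : ℝ → ℂ),
        MemLp h (ENNReal.ofReal r') volume →
        Integrable φ volume →
        (∀ y : ℝ, ‖φ y‖ ≤ δ⁻¹ * (1 + |y| / δ) ^ (-M)) →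
        ∑ i : Fin m, δ * (⨆ x ∈ Set.Icc (t i) (t i + δ), ‖∫ y, h y * φ (x - y)‖ ^ r')
          ≤ K * ∫ z, ‖h z‖ ^ r' *
              (1 + Metric.infDist z (Set.Icc aJ bJ) / (bJ - aJ)) ^ (-N) :=
  small_tiles_h_estimate_general r' M hr'₁ hM
end

section
/- Let $f \in L^2(\mathbb{R})$ have Fourier transform supported in an interval of length $L$, let $I$ be an interval with $|I| = L^{-1}$, and let $I_\rho \subset I$ be a subinterval. Then for every $N > 0$, $$\frac{\|f\|_{L^2(I_\rho)}}{|I_\rho|^{1/2}} \lesssim_N \sum_{\mathfrak{n} \in \mathbb{Z}} (1 + |\mathfrak{n}|)^{-N} \frac{1}{|I|}\int_{I + \mathfrak{n}|I|} |f(y)|\, dy.$$ -/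
/-!
Fix a Schwartz function `ψ` equal to `1` on `[0, 1]` and put `χ ξ = ψ ((ξ - ω) / L)`, so that
`𝓕 f = χ • 𝓕 f`. Fourier inversion and the multiplication formula `∫ 𝓕 f • g = ∫ f • 𝓕 g` then
reproduce `f` as the convolution `𝓕⁻ χ ⋆ f`, and the kernel is an `L¹`-normalised bump at scale
`L⁻¹`: `‖𝓕⁻ χ u‖ = L ‖𝓕⁻ ψ (L u)‖ ≲_N L (1 + L |u|) ^ (-N)`. For `x ∈ I` and `y ∈ I + 𝔫 |I|` we
have `1 + |𝔫| ≤ 2 (1 + L |x - y|)`, so splitting the convolution integral along the translates of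
`I` bounds `‖f x‖` by the right-hand side at every point of `I`, hence also the `L²` average over
`I_ρ ⊆ I`.
-/

open MeasureTheory Set FourierTransform
open scoped Real RealInnerProductSpace SchwartzMap

namespace SchwartzMap

theorem exists_norm_le_mul_one_add_norm_rpow_neg {E F : Type*} [NormedAddCommGroup E]
    [NormedSpace ℝ E] [NormedAddCommGroup F] [NormedSpace ℝ F] (f : 𝓢(E, F)) (N : ℝ) :
    ∃ C, ∀ x, ‖f x‖ ≤ C * (1 + ‖x‖) ^ (-N) := by
  set k := ⌈N⌉₊
  refine ⟨2 ^ k * (Finset.Iic (k, 0)).sup (fun m => SchwartzMap.seminorm ℝ m.1 m.2) f,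
    fun x => ?_⟩
  have hx : 1 ≤ 1 + ‖x‖ := le_add_of_nonneg_right (norm_nonneg x)
  have hdecay := one_add_le_sup_seminorm_apply (𝕜 := ℝ) (m := (k, 0)) le_rfl le_rfl f x
  rw [norm_iteratedFDeriv_zero] at hdecay
  calc ‖f x‖ = ((1 + ‖x‖) ^ (k : ℝ) * ‖f x‖) * (1 + ‖x‖) ^ (-(k : ℝ)) := by
        rw [mul_comm, ← mul_assoc, ← Real.rpow_add (by linarith), neg_add_cancel,
          Real.rpow_zero, one_mul]
    _ ≤ _ := by
        rw [Real.rpow_natCast]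
        exact mul_le_mul hdecay
          (Real.rpow_le_rpow_of_exponent_le hx (neg_le_neg (Nat.le_ceil N)))
          (by positivity) ((by positivity : (0 : ℝ) ≤ _).trans hdecay)

theorem exists_eq_one_on_Icc (a b : ℝ) : ∃ ψ : 𝓢(ℝ, ℂ), ∀ x ∈ Icc a b, ψ x = 1 := by
  obtain ⟨φ, hφ⟩ : ∃ φ : ContDiffBump ((a + b) / 2), φ.rIn = |b - a| / 2 + 1 :=
    ⟨⟨|b - a| / 2 + 1, |b - a| / 2 + 2, by positivity, by linarith⟩, rfl⟩
  have hsupp : HasCompactSupport fun x => (φ x : ℂ) :=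
    φ.hasCompactSupport.comp_left Complex.ofReal_zero
  refine ⟨hsupp.toSchwartzMap (Complex.ofRealCLM.contDiff.comp (φ.contDiff (n := (⊤ : ℕ∞)))),
    fun x hx => ?_⟩
  have : φ x = 1 := φ.one_of_mem_closedBall <| by
    rw [Metric.mem_closedBall, Real.dist_eq, abs_le, hφ]
    constructor <;> linarith [hx.1, hx.2, le_abs_self (b - a), neg_abs_le (b - a)]
  change ((φ x : ℝ) : ℂ) = 1
  rw [this, Complex.ofReal_one]

end SchwartzMap

namespace Real

variable {V E : Type*} [NormedAddCommGroup V] [InnerProductSpace ℝ V] [FiniteDimensional ℝ V]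
  [MeasurableSpace V] [BorelSpace V] [NormedAddCommGroup E] [NormedSpace ℂ E]

theorem fourier_fourierChar_inner_smul (χ : V → E) (x y : V) :
    𝓕 (fun ξ => 𝐞 ⟪ξ, x⟫ • χ ξ) y = 𝓕⁻ χ (x - y) := by
  simp only [fourier_eq, fourierInv_eq, smul_smul, ← AddChar.map_add_eq_mul, inner_sub_right,
    neg_add_eq_sub]

theorem fourierInv_comp_sub_div (g : ℝ → E) {L : ℝ} (hL : 0 < L) (ω u : ℝ) :
    𝓕⁻ (fun ξ => g ((ξ - ω) / L)) u = L • 𝐞 (ω * u) • 𝓕⁻ g (L * u) := by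
  set k : ℝ → E := fun v => 𝐞 (u * (v + ω)) • g (v / L)
  have hk : ∫ v, k v = L • ∫ v, k (L * v) := by
    rw [Measure.integral_comp_mul_left, abs_of_pos (inv_pos.2 hL), smul_inv_smul₀ hL.ne']
  calc 𝓕⁻ (fun ξ => g ((ξ - ω) / L)) u = ∫ v, k v := by
        rw [fourierInv_eq, ← integral_add_right_eq_self _ ω]
        simp [k]
    _ = _ := by
        rw [hk, fourierInv_eq]
        congr 1
        rw [Circle.smul_def, ← integral_smul]
        congr 1 with v
        simp only [k, Circle.smul_def, smul_smul, ← Circle.coe_mul, ← AddChar.map_add_eq_mul,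
          mul_div_cancel_left₀ _ hL.ne']
        congr 3
        rw [Real.inner_apply]
        ring

variable [CompleteSpace E]

theorem integral_fourier_smul_eq {f : V → ℂ} {g : V → E} (hf : Integrable f)
    (hg : Integrable g) : ∫ ξ, 𝓕 f ξ • g ξ = ∫ x, f x • 𝓕 g x := by
  have hflip : (innerₗ V).flip = innerₗ V := LinearMap.ext₂ fun x y => real_inner_comm x y
  have := VectorFourier.integral_fourierIntegral_smul_eq_flip (L := innerₗ V)
    continuous_fourierChar continuous_inner hf hg
  rwa [hflip] at this

theorem eq_integral_fourierInv_mul_of_fourier_eq_mul {f χ : V → ℂ} (hf : Continuous f)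
    (hfi : Integrable f) (hχ : Integrable χ) (hfχ : ∀ ξ, 𝓕 f ξ = χ ξ * 𝓕 f ξ) (x : V) :
    f x = ∫ y, 𝓕⁻ χ (x - y) * f y := by
  have hFcont : Continuous (𝓕 f) := VectorFourier.fourierIntegral_continuous
    continuous_fourierChar (innerSL ℝ).continuous₂ hfi
  have hF : Integrable (𝓕 f) := by
    rw [funext hfχ]
    exact hχ.mul_bdd hFcont.aestronglyMeasurable
      (ae_of_all _ (VectorFourier.norm_fourierIntegral_le_integral_norm _ _ _ f))
  have hχx : Integrable fun ξ => 𝐞 ⟪ξ, x⟫ • χ ξ := by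
    simpa using (fourierIntegral_convergent_iff (-x)).2 hχ
  calc f x = 𝓕⁻ (𝓕 f) x := by rw [hf.fourierInv_fourier_eq hfi hF]
    _ = ∫ ξ, 𝓕 f ξ • (𝐞 ⟪ξ, x⟫ • χ ξ) := by
        rw [fourierInv_eq]
        congr 1 with ξ
        conv_lhs => rw [hfχ]
        simp only [Circle.smul_def, smul_eq_mul]
        ring
    _ = ∫ y, f y • 𝓕 (fun ξ => 𝐞 ⟪ξ, x⟫ • χ ξ) y := integral_fourier_smul_eq hfi hχx
    _ = ∫ y, 𝓕⁻ χ (x - y) * f y := by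
        simp only [fourier_fourierChar_inner_smul, smul_eq_mul, mul_comm]

end Real

theorem hasSum_integral_Ico_add_zsmul {E : Type*} [NormedAddCommGroup E] [NormedSpace ℝ E]
    {g : ℝ → E} (hg : Integrable g) {p : ℝ} (hp : 0 < p) (a : ℝ) :
    HasSum (fun n : ℤ => ∫ y in Ico (a + n • p) (a + (n + 1) • p), g y) (∫ y, g y) := by
  have := hasSum_integral_iUnion (fun _ => measurableSet_Ico)
    (pairwise_disjoint_Ico_add_zsmul a p) (hg.integrableOn (s := ⋃ n : ℤ, _))
  rwa [iUnion_Ico_add_zsmul hp, setIntegral_univ] at this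

theorem integral_mul_le_tsum_of_le_on_Ico {w g : ℝ → ℝ} {b : ℤ → ℝ} {p B : ℝ} (hp : 0 < p)
    (a : ℝ) (hg : Integrable g) (hg0 : 0 ≤ g) (hw : AEStronglyMeasurable w) (hw0 : 0 ≤ w)
    (hwb : ∀ n : ℤ, ∀ y ∈ Ico (a + n • p) (a + (n + 1) • p), w y ≤ b n) (hbB : ∀ n, b n ≤ B) :
    ∫ y, w y * g y ≤ ∑' n : ℤ, b n * ∫ y in Ico (a + n • p) (a + (n + 1) • p), g y := by
  have hwB : ∀ y, ‖w y‖ ≤ B := fun y => by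
    obtain ⟨n, hn⟩ := mem_iUnion.1 ((iUnion_Ico_add_zsmul hp a).symm ▸ mem_univ y)
    rw [Real.norm_of_nonneg (hw0 y)]
    exact (hwb n y hn).trans (hbB n)
  have hwg : Integrable fun y => w y * g y := hg.bdd_mul hw (ae_of_all _ hwB)
  have hb0 : ∀ n, 0 ≤ b n := fun n => (hw0 _).trans <| hwb n _ <| left_mem_Ico.2 <| by
    rw [add_smul, one_smul, ← add_assoc]; exact lt_add_of_pos_right _ hp
  have htile : ∀ n : ℤ, ∫ y in Ico (a + n • p) (a + (n + 1) • p), w y * g y ≤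
      b n * ∫ y in Ico (a + n • p) (a + (n + 1) • p), g y := fun n => by
    rw [← integral_const_mul]
    exact setIntegral_mono_on hwg.integrableOn (hg.integrableOn.const_mul _) measurableSet_Ico
      fun y hy => mul_le_mul_of_nonneg_right (hwb n y hy) (hg0 y)
  have hsummable : Summable fun n : ℤ => b n * ∫ y in Ico (a + n • p) (a + (n + 1) • p), g y :=
    ((hasSum_integral_Ico_add_zsmul hg hp a).summable.mul_left B).of_nonneg_of_le
      (fun n => mul_nonneg (hb0 n) (setIntegral_nonneg measurableSet_Ico fun y _ => hg0 y))
      fun n => mul_le_mul_of_nonneg_right (hbB n)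
        (setIntegral_nonneg measurableSet_Ico fun y _ => hg0 y)
  rw [← (hasSum_integral_Ico_add_zsmul hwg hp a).tsum_eq]
  exact (hasSum_integral_Ico_add_zsmul hwg hp a).summable.tsum_le_tsum htile hsummable

theorem abs_intCast_le_one_add_abs_sub_div_of_mem_Ico {a p x y : ℝ} {n : ℤ} (hp : 0 < p)
    (hx : x ∈ Icc a (a + p)) (hy : y ∈ Ico (a + n • p) (a + (n + 1) • p)) :
    |(n : ℝ)| ≤ 1 + |x - y| / p := by
  rw [add_smul, one_smul, zsmul_eq_mul] at hy
  have hnear : |n * p - (y - x)| ≤ p :=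
    abs_le.2 ⟨by linarith [hx.1, hy.2], by linarith [hx.2, hy.1]⟩
  rw [← sub_le_iff_le_add', le_div_iff₀ hp]
  calc (|(n : ℝ)| - 1) * p = |n * p| - p := by rw [abs_mul, abs_of_pos hp]; ring
    _ ≤ |x - y| := by
      linarith [abs_sub_abs_le_abs_sub (n * p) (y - x), abs_sub_comm y x]

theorem sqrt_average_sq_norm_le_of_norm_le {E : Type*} [NormedAddCommGroup E] {f : ℝ → E}
    {c d B : ℝ} (hcd : c < d) (hB : ∀ x ∈ Icc c d, ‖f x‖ ≤ B) :
    √((∫ x in Icc c d, ‖f x‖ ^ 2) / (d - c)) ≤ B := by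
  have hB0 : 0 ≤ B := (norm_nonneg _).trans (hB c (left_mem_Icc.2 hcd.le))
  have hint : ‖∫ x in Icc c d, ‖f x‖ ^ 2‖ ≤ B ^ 2 * volume.real (Icc c d) :=
    norm_setIntegral_le_of_norm_le_const measure_Icc_lt_top fun x hx => by
      rw [Real.norm_of_nonneg (by positivity)]
      exact pow_le_pow_left₀ (norm_nonneg _) (hB x hx) 2
  rw [Real.volume_real_Icc_of_le hcd.le] at hint
  rw [Real.sqrt_le_left hB0, div_le_iff₀ (sub_pos.2 hcd)]
  exact (le_abs_self _).trans hint

theorem norm_fourierInv_comp_sub_div_le_of_mem_Ico {ψ : ℝ → ℂ} {C N L ω t x y : ℝ} {n : ℤ}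
    (hC : ∀ u, ‖𝓕⁻ ψ u‖ ≤ C * (1 + |u|) ^ (-N)) (hN : 0 ≤ N) (hL : 0 < L)
    (hx : x ∈ Icc t (t + L⁻¹)) (hy : y ∈ Ico (t + n • L⁻¹) (t + (n + 1) • L⁻¹)) :
    ‖𝓕⁻ (fun ξ => ψ ((ξ - ω) / L)) (x - y)‖ ≤ L * C * 2 ^ N * (1 + |(n : ℝ)|) ^ (-N) := by
  have hC0 : 0 ≤ C := nonneg_of_mul_nonneg_left ((norm_nonneg _).trans (hC 0)) (by positivity)
  have hn := abs_intCast_le_one_add_abs_sub_div_of_mem_Ico (inv_pos.2 hL) hx hy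
  rw [div_inv_eq_mul] at hn
  have hcompare : 1 + |(n : ℝ)| ≤ 2 * (1 + |L * (x - y)|) := by
    rw [abs_mul, abs_of_pos hL]
    nlinarith [abs_nonneg (x - y)]
  rw [Real.fourierInv_comp_sub_div _ hL, norm_smul, Circle.norm_smul, Real.norm_of_nonneg hL.le]
  calc L * ‖𝓕⁻ ψ (L * (x - y))‖ ≤ L * C * (1 + |L * (x - y)|) ^ (-N) := by
        rw [mul_assoc]
        exact mul_le_mul_of_nonneg_left (hC _) hL.le
    _ = L * C * (2 ^ N * (2 * (1 + |L * (x - y)|)) ^ (-N)) := by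
        rw [Real.mul_rpow zero_le_two (by positivity), Real.rpow_neg zero_le_two,
          mul_inv_cancel_left₀ (Real.rpow_pos_of_pos two_pos N).ne']
    _ ≤ L * C * (2 ^ N * (1 + |(n : ℝ)|) ^ (-N)) := by
        gcongr L * C * (2 ^ N * ?_)
        exact Real.rpow_le_rpow_of_nonpos (by positivity) hcompare (by linarith)
    _ = L * C * 2 ^ N * (1 + |(n : ℝ)|) ^ (-N) := by ring

theorem norm_le_mul_tsum_setIntegral_of_fourier_eq_zero {f : ℝ → ℂ} {ψ : 𝓢(ℝ, ℂ)}
    {C N L ω t x : ℝ} (hψ : ∀ ξ ∈ Icc (0 : ℝ) 1, ψ ξ = 1)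
    (hC : ∀ u, ‖𝓕⁻ (ψ : ℝ → ℂ) u‖ ≤ C * (1 + |u|) ^ (-N)) (hN : 0 ≤ N) (hL : 0 < L)
    (hf : Continuous f) (hfi : Integrable f) (hsupp : ∀ ξ ∉ Icc ω (ω + L), 𝓕 f ξ = 0)
    (hx : x ∈ Icc t (t + L⁻¹)) :
    ‖f x‖ ≤ C * 2 ^ N * ∑' n : ℤ, (1 + |(n : ℝ)|) ^ (-N) *
      (L * ∫ y in Icc (t + n / L) (t + (n + 1) / L), ‖f y‖) := by
  set χ : ℝ → ℂ := fun ξ => ψ ((ξ - ω) / L)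
  have hχ : Integrable χ := (ψ.integrable.comp_div hL.ne').comp_sub_right ω
  have hfχ : ∀ ξ, 𝓕 f ξ = χ ξ * 𝓕 f ξ := fun ξ => by
    by_cases hξ : ξ ∈ Icc ω (ω + L)
    · rw [show χ ξ = 1 from
        hψ _ ⟨div_nonneg (by linarith [hξ.1]) hL.le, (div_le_one hL).2 (by linarith [hξ.2])⟩,
        one_mul]
    · rw [hsupp ξ hξ, mul_zero]
  have hKcont : Continuous (𝓕⁻ χ) :=
    VectorFourier.fourierIntegral_continuous Real.continuous_fourierChar continuous_inner.neg hχ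
  have hC0 : 0 ≤ C := nonneg_of_mul_nonneg_left ((norm_nonneg _).trans (hC 0)) (by positivity)
  have hweight_le : ∀ n : ℤ, L * C * 2 ^ N * (1 + |(n : ℝ)|) ^ (-N) ≤ L * C * 2 ^ N := fun n =>
    mul_le_of_le_one_right (by positivity)
      (Real.rpow_le_one_of_one_le_of_nonpos (by linarith [abs_nonneg (n : ℝ)]) (by linarith))
  calc ‖f x‖ = ‖∫ y, 𝓕⁻ χ (x - y) * f y‖ := by
        rw [← Real.eq_integral_fourierInv_mul_of_fourier_eq_mul hf hfi hχ hfχ x]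
    _ ≤ ∫ y, ‖𝓕⁻ χ (x - y)‖ * ‖f y‖ := by
        simp only [← norm_mul]
        exact norm_integral_le_integral_norm _
    _ ≤ ∑' n : ℤ, L * C * 2 ^ N * (1 + |(n : ℝ)|) ^ (-N) *
          ∫ y in Ico (t + n • L⁻¹) (t + (n + 1) • L⁻¹), ‖f y‖ :=
        integral_mul_le_tsum_of_le_on_Ico (inv_pos.2 hL) t hfi.norm (fun _ => norm_nonneg _)
          (hKcont.comp (continuous_const.sub continuous_id)).norm.aestronglyMeasurable
          (fun _ => norm_nonneg _)
          (fun _ _ hy => norm_fourierInv_comp_sub_div_le_of_mem_Ico hC hN hL hx hy) hweight_le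
    _ = _ := by
        rw [← tsum_mul_left]
        congr 1 with n
        rw [integral_Icc_eq_integral_Ico, zsmul_eq_mul, zsmul_eq_mul]
        push_cast
        simp only [div_eq_mul_inv]
        ring

/-- The 'morally constant' estimate from Section 2: if `f` has Fourier support in an
interval of length `L` and `I = [t, t + 1/L]` is any interval of length `L⁻¹`, then for
any subinterval `[c,d] ⊆ I` the normalized `L²` norm of `f` on `[c,d]` is bounded by
rapidly decaying shifted `L¹` averages of `f` over the translates `I + 𝔫|I|`. -/
theorem morally_constant_estimate (N : ℝ) (hN : 0 < N) :
    ∃ C > 0, ∀ (f : ℝ → ℂ) (L ωa t c d : ℝ), 0 < L → c < d →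
      Continuous f → Integrable f volume → MemLp f 2 volume →
      (∀ ξ : ℝ, ξ ∉ Set.Icc ωa (ωa + L) → FourierTransform.fourier f ξ = 0) →
      Set.Icc c d ⊆ Set.Icc t (t + 1 / L) →
      Real.sqrt ((∫ x in Set.Icc c d, ‖f x‖ ^ 2) / (d - c)) ≤
        C * ∑' 𝔫 : ℤ, (1 + |(𝔫:ℝ)|) ^ (-N) *
          (L * ∫ y in Set.Icc (t + 𝔫 / L) (t + (𝔫 + 1) / L), ‖f y‖) := by
  obtain ⟨ψ, hψ⟩ := SchwartzMap.exists_eq_one_on_Icc 0 1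
  obtain ⟨C, hC⟩ := (𝓕⁻ ψ).exists_norm_le_mul_one_add_norm_rpow_neg N
  have hdecay : ∀ u, ‖𝓕⁻ (ψ : ℝ → ℂ) u‖ ≤ max C 1 * (1 + |u|) ^ (-N) := fun u => by
    rw [← SchwartzMap.fourierInv_coe, ← Real.norm_eq_abs]
    exact (hC u).trans (by gcongr; exact le_max_left C 1)
  refine ⟨max C 1 * 2 ^ N, by positivity, fun f L ω t c d hL hcd hf hfi _ hsupp hsub => ?_⟩
  refine sqrt_average_sq_norm_le_of_norm_le hcd fun x hx => ?_
  exact norm_le_mul_tsum_setIntegral_of_fourier_eq_zero hψ hdecay hN.le hL hf hfi hsupp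
    (by simpa only [one_div] using hsub hx)
end
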